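/- In the standard 600-cell, the only vertices orthogonal to both (2,0,0,0) and (0,2,0,0) are ±(0,0,2,0) and ±(0,0,0,2); hence the orthogonal pair {(2,0,0,0), (0,2,0,0)} lies in a unique tetrad of mutually orthogonal vertex pairs. -/
import Mathlib


noncomputable section


noncomputable section

/-- The golden ratio. -/
def gr : ℝ := (1 + Real.sqrt 5) / 2

/-- The 120 vertices of the 600-cell in standard coordinates: all coordinate
permutations of `(±2,0,0,0)`, all `(±1,±1,±1,±1)`, and all even coordinate
permutations of `(0,±1,±φ,±φ⁻¹)`. -/
def H600 : Set (Fin 4 → ℝ) :=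
  {v | ∃ σ : Equiv.Perm (Fin 4), ∃ s : ℝ, (s = 2 ∨ s = -2) ∧
        v = ![s, 0, 0, 0] ∘ σ} ∪
  {v | ∀ i, v i = 1 ∨ v i = -1} ∪
  {v | ∃ σ : Equiv.Perm (Fin 4), Equiv.Perm.sign σ = 1 ∧
        ∃ e₁ e₂ e₃ : ℝ, (e₁ = 1 ∨ e₁ = -1) ∧ (e₂ = 1 ∨ e₂ = -1) ∧
          (e₃ = 1 ∨ e₃ = -1) ∧ v = ![0, e₁, e₂ * gr, e₃ * gr⁻¹] ∘ σ}

lemma gr_aux_pos : 0 < (1 + Real.sqrt 5) / 2 := by positivity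

lemma vec1_ne (s : ℝ) (hs : s ≠ 0) (j : Fin 4) (hj : j ≠ 0) : ![s, 0, 0, 0] j = 0 := by
  fin_cases j <;> simp_all

lemma key (w : Fin 4 → ℝ)
    (hw : ((∃ σ : Equiv.Perm (Fin 4), ∃ s : ℝ, (s = 2 ∨ s = -2) ∧
        w = ![s, 0, 0, 0] ∘ σ) ∨ (∀ i, w i = 1 ∨ w i = -1)) ∨
      (∃ σ : Equiv.Perm (Fin 4), Equiv.Perm.sign σ = 1 ∧
        ∃ e₁ e₂ e₃ : ℝ, (e₁ = 1 ∨ e₁ = -1) ∧ (e₂ = 1 ∨ e₂ = -1) ∧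
          (e₃ = 1 ∨ e₃ = -1) ∧ w = ![0, e₁, e₂ * ((1 + Real.sqrt 5) / 2),
            e₃ * ((1 + Real.sqrt 5) / 2)⁻¹] ∘ σ))
    (h0 : w 0 = 0) (h1 : w 1 = 0) :
    w = ![0, 0, 2, 0] ∨ w = ![0, 0, -2, 0] ∨ w = ![0, 0, 0, 2] ∨ w = ![0, 0, 0, -2] := by
  rcases hw with (⟨σ, s, hs, rfl⟩ | h) | ⟨σ, -, e₁, e₂, e₃, he₁, he₂, he₃, rfl⟩
  · have hs0 : s ≠ 0 := by rcases hs with rfl | rfl <;> norm_num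
    simp only [Function.comp_apply] at h0 h1
    have hσ0 : σ 0 ≠ 0 := by intro h; rw [h] at h0; simp at h0; exact hs0 h0
    have hσ1 : σ 1 ≠ 0 := by intro h; rw [h] at h1; simp at h1; exact hs0 h1
    obtain ⟨i, hi⟩ := σ.surjective 0
    have hi01 : i ≠ 0 ∧ i ≠ 1 := by
      constructor <;> rintro rfl <;> [exact hσ0 hi; exact hσ1 hi]
    have hmain : ∀ k : Fin 4, σ k = 0 →
        (![s,0,0,0] ∘ σ : Fin 4 → ℝ) = fun j => if j = k then s else 0 := by
      intro k hk
      funext j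
      by_cases hjk : j = k
      · subst hjk; simp [Function.comp_apply, hk]
      · have : σ j ≠ 0 := fun h => hjk (σ.injective (h.trans hk.symm))
        simp only [Function.comp_apply, if_neg hjk]
        exact vec1_ne s hs0 _ this
    fin_cases i
    · exact absurd rfl hi01.1
    · exact absurd rfl hi01.2
    · have := hmain 2 hi
      rw [this]
      rcases hs with rfl | rfl
      · left; funext j; fin_cases j <;> norm_num [Fin.ext_iff] <;> decide
      · right; left; funext j; fin_cases j <;> norm_num [Fin.ext_iff] <;> decide
    · have := hmain 3 hi
      rw [this]
      rcases hs with rfl | rfl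
      · right; right; left; funext j; fin_cases j <;> norm_num [Fin.ext_iff] <;> decide
      · right; right; right; funext j; fin_cases j <;> norm_num [Fin.ext_iff] <;> decide
  · rcases h 0 with h | h <;> rw [h0] at h <;> norm_num at h
  · exfalso
    have hg : ((1 + Real.sqrt 5) / 2 : ℝ) ≠ 0 := ne_of_gt gr_aux_pos
    have hgi : (((1 + Real.sqrt 5) / 2 : ℝ))⁻¹ ≠ 0 := inv_ne_zero hg
    have hz : ∀ j : Fin 4, ![0, e₁, e₂ * ((1 + Real.sqrt 5) / 2),
        e₃ * ((1 + Real.sqrt 5) / 2)⁻¹] j = 0 → j = 0 := by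
      intro j hj
      fin_cases j
      · rfl
      · rcases he₁ with rfl | rfl <;> norm_num at hj
      · rcases he₂ with rfl | rfl <;> simp_all
      · rcases he₃ with rfl | rfl <;> simp_all
    simp only [Function.comp_apply] at h0 h1
    have e0 : σ 0 = 0 := hz _ h0
    have e1 : σ 1 = 0 := hz _ h1
    have := σ.injective (e0.trans e1.symm)
    simp at this

lemma key' (w : Fin 4 → ℝ) (hw : w ∈ H600)
    (hA : (∑ i, ![(2:ℝ), 0, 0, 0] i * w i) = 0)
    (hB : (∑ i, ![(0:ℝ), 2, 0, 0] i * w i) = 0) :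
    w = ![0, 0, 2, 0] ∨ w = ![0, 0, -2, 0] ∨ w = ![0, 0, 0, 2] ∨ w = ![0, 0, 0, -2] := by
  simp [Fin.sum_univ_four] at hA hB
  apply key w _ hA hB
  have := hw
  unfold H600 at this
  simp only [Set.mem_union, Set.mem_setOf_eq] at this
  unfold gr at this
  exact this

/-- The only vertices of the 600-cell orthogonal to both `(2,0,0,0)` and
`(0,2,0,0)` are `±(0,0,2,0)` and `±(0,0,0,2)`; hence the orthogonal pair
lies in a unique tetrad of mutually orthogonal vertex pairs. -/
theorem H600_unique_tetrad :
    (∀ w ∈ H600, (∑ i, ![(2:ℝ), 0, 0, 0] i * w i) = 0 →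
        (∑ i, ![(0:ℝ), 2, 0, 0] i * w i) = 0 →
        w = ![0, 0, 2, 0] ∨ w = ![0, 0, -2, 0] ∨
          w = ![0, 0, 0, 2] ∨ w = ![0, 0, 0, -2]) ∧
    ∀ T : Finset (Fin 4 → ℝ), ↑T ⊆ H600 → T.card = 4 →
      ![(2:ℝ), 0, 0, 0] ∈ T → ![(0:ℝ), 2, 0, 0] ∈ T →
      (∀ w ∈ T, ∀ u ∈ T, w ≠ u → (∑ i, w i * u i) = 0) →
      ∀ w ∈ T, w ∈ ({![2, 0, 0, 0], ![0, 2, 0, 0], ![0, 0, 2, 0],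
        ![0, 0, -2, 0], ![0, 0, 0, 2], ![0, 0, 0, -2]} : Set (Fin 4 → ℝ)) := by
  constructor
  · exact key'
  · intro T hT _ hv1 hv2 horth w hw
    simp only [Set.mem_insert_iff, Set.mem_singleton_iff]
    by_cases h1 : w = ![(2:ℝ), 0, 0, 0]
    · tauto
    by_cases h2 : w = ![(0:ℝ), 2, 0, 0]
    · tauto
    have o1 := horth _ hv1 w hw (Ne.symm h1)
    have o2 := horth _ hv2 w hw (Ne.symm h2)
    have := key' w (hT hw) o1 o2
    tauto

end
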